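/- Let x_S be s-sparse with support S, and let S(k+1) be an index set of size s such that ‖(x(k) + μg)_{S\S(k+1)}‖₂ ≤ ‖(x(k) + μg)_{S(k+1)\S}‖₂, where g = AᵀA(x_S − x(k)) + h for some vectors x(k), h. Then ‖(x_S)_{complement of S(k+1)}‖₂ ≤ √2·‖((μAᵀA − I)(x_S − x(k)) + μh)_{SΔS(k+1)}‖₂, where SΔS(k+1) denotes the symmetric difference. -/

import Mathlib

open Finset Matrix

/-- Euclidean norm of a finitely-indexed real vector. -/
noncomputable def nrm {ι : Type*} [Fintype ι] (x : ι → ℝ) : ℝ :=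
  Real.sqrt (∑ i, x i ^ 2)

open Classical in
/-- Support of a vector as a finite set of indices. -/
noncomputable def spt {n : ℕ} (x : Fin n → ℝ) : Finset (Fin n) :=
  Finset.univ.filter fun i => x i ≠ 0

/-- Restriction of a vector to an index set: keep entries in `U`, zero the rest. -/
def restr {n : ℕ} (x : Fin n → ℝ) (U : Finset (Fin n)) : Fin n → ℝ :=
  fun i => if i ∈ U then x i else 0

/-- `A` satisfies the RIP of order `t` with constant `δ`. -/
def RIP {m n : ℕ} (A : Matrix (Fin m) (Fin n) ℝ) (t : ℕ) (δ : ℝ) : Prop :=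
  ∀ x : Fin n → ℝ, (spt x).card ≤ t →
    (1 - δ) * nrm x ^ 2 ≤ nrm (A.mulVec x) ^ 2 ∧
      nrm (A.mulVec x) ^ 2 ≤ (1 + δ) * nrm x ^ 2

section Norm

variable {ι : Type*} [Fintype ι]

lemma nrm_eq_norm_toLp (x : ι → ℝ) : nrm x = ‖WithLp.toLp 2 x‖ := by
  simp [nrm, EuclideanSpace.norm_eq, sq_abs]

lemma nrm_nonneg (x : ι → ℝ) : 0 ≤ nrm x :=
  Real.sqrt_nonneg _

lemma nrm_sq (x : ι → ℝ) : nrm x ^ 2 = ∑ i, x i ^ 2 :=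
  Real.sq_sqrt (sum_nonneg fun _ _ => sq_nonneg _)

lemma nrm_add_le (x y : ι → ℝ) : nrm (x + y) ≤ nrm x + nrm y := by
  simpa only [nrm_eq_norm_toLp, WithLp.toLp_add] using norm_add_le _ _

lemma nrm_neg (x : ι → ℝ) : nrm (-x) = nrm x := by
  simp [nrm]

lemma nrm_sub_le (x y : ι → ℝ) : nrm (x - y) ≤ nrm x + nrm y := by
  simpa only [sub_eq_add_neg, nrm_neg] using nrm_add_le x (-y)

end Norm

section Restriction

variable {n : ℕ}

lemma restr_sub (x y : Fin n → ℝ) (U : Finset (Fin n)) :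
    restr (x - y) U = restr x U - restr y U := by
  ext i
  by_cases hi : i ∈ U <;> simp [restr, hi]

lemma restr_congr {x y : Fin n → ℝ} {U : Finset (Fin n)} (h : ∀ i ∈ U, x i = y i) :
    restr x U = restr y U := by
  ext i
  by_cases hi : i ∈ U <;> simp [restr, hi, h]

lemma apply_eq_zero_of_spt_subset {x : Fin n → ℝ} {S : Finset (Fin n)} (hx : spt x ⊆ S)
    {i : Fin n} (hi : i ∉ S) : x i = 0 := by
  by_contra hne
  exact hi (hx (by simp [spt, hne]))

lemma restr_compl_eq_restr_sdiff {x : Fin n → ℝ} {S : Finset (Fin n)} (hx : spt x ⊆ S)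
    (T : Finset (Fin n)) : restr x Tᶜ = restr x (S \ T) := by
  ext i
  by_cases hiS : i ∈ S
  · simp [restr, hiS]
  · simp [restr, hiS, apply_eq_zero_of_spt_subset hx hiS]

lemma nrm_restr_sq (x : Fin n → ℝ) (U : Finset (Fin n)) :
    nrm (restr x U) ^ 2 = ∑ i ∈ U, x i ^ 2 := by
  simp [nrm_sq, restr, ite_pow, sum_ite_mem]

lemma nrm_restr_add_nrm_restr_le {U V : Finset (Fin n)} (hUV : Disjoint U V) (x : Fin n → ℝ) :
    nrm (restr x U) + nrm (restr x V) ≤ Real.sqrt 2 * nrm (restr x (U ∪ V)) := by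
  have hsq : nrm (restr x (U ∪ V)) ^ 2 = nrm (restr x U) ^ 2 + nrm (restr x V) ^ 2 := by
    simp only [nrm_restr_sq, sum_union hUV]
  rw [← Real.sqrt_sq (nrm_nonneg (restr x (U ∪ V))), ← Real.sqrt_mul zero_le_two, hsq]
  exact Real.le_sqrt_of_sq_le add_sq_le

end Restriction

/-- Writing `v = x + w` for the vector that was thresholded, the mass of `x` outside `T` lives on
`S \ T`, where `x = v - w`; the choice of `T` trades `v` on `S \ T` for `v = w` on `T \ S`. -/
theorem nrm_restr_compl_le_of_thresholding {n : ℕ} {x w : Fin n → ℝ} {S T : Finset (Fin n)}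
    (hx : spt x ⊆ S) (hthres : nrm (restr (x + w) (S \ T)) ≤ nrm (restr (x + w) (T \ S))) :
    nrm (restr x Tᶜ) ≤ Real.sqrt 2 * nrm (restr w ((S \ T) ∪ (T \ S))) := by
  have hv : restr (x + w) (T \ S) = restr w (T \ S) := restr_congr fun i hi => by
    simp [apply_eq_zero_of_spt_subset hx (mem_sdiff.mp hi).2]
  calc nrm (restr x Tᶜ)
      = nrm (restr (x + w) (S \ T) - restr w (S \ T)) := by
        rw [restr_compl_eq_restr_sdiff hx, ← restr_sub, add_sub_cancel_right]
    _ ≤ nrm (restr (x + w) (S \ T)) + nrm (restr w (S \ T)) := nrm_sub_le _ _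
    _ ≤ nrm (restr w (S \ T)) + nrm (restr w (T \ S)) := by
        rw [← hv]; linarith
    _ ≤ Real.sqrt 2 * nrm (restr w ((S \ T) ∪ (T \ S))) :=
        nrm_restr_add_nrm_restr_le disjoint_sdiff_sdiff w

theorem stmt_11_general {m n : ℕ} (A : Matrix (Fin m) (Fin n) ℝ) (μ : ℝ)
    (xS xk h : Fin n → ℝ) (S T : Finset (Fin n))
    (hxS : spt xS ⊆ S)
    (g : Fin n → ℝ) (hg : g = Matrix.mulVec Aᵀ (A.mulVec (xS - xk)) + h)
    (hthres : nrm (restr (xk + μ • g) (S \ T)) ≤ nrm (restr (xk + μ • g) (T \ S))) :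
    nrm (restr xS Tᶜ) ≤
      Real.sqrt 2 *
        nrm (restr (μ • Matrix.mulVec Aᵀ (A.mulVec (xS - xk)) - (xS - xk) + μ • h)
          ((S \ T) ∪ (T \ S))) := by
  have hv : xk + μ • g = xS + (μ • Matrix.mulVec Aᵀ (A.mulVec (xS - xk)) - (xS - xk) + μ • h) := by
    rw [hg, smul_add]; abel
  rw [hv] at hthres
  exact nrm_restr_compl_le_of_thresholding hxS hthres

theorem stmt_11 {m n : ℕ} (A : Matrix (Fin m) (Fin n) ℝ) (s : ℕ) (μ : ℝ) (hμ : 0 < μ)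
    (xS xk h : Fin n → ℝ) (S T : Finset (Fin n))
    (hS : S.card ≤ s) (hxS : spt xS ⊆ S) (hT : T.card = s)
    (g : Fin n → ℝ) (hg : g = Matrix.mulVec Aᵀ (A.mulVec (xS - xk)) + h)
    (hthres : nrm (restr (xk + μ • g) (S \ T)) ≤ nrm (restr (xk + μ • g) (T \ S))) :
    nrm (restr xS Tᶜ) ≤
      Real.sqrt 2 *
        nrm (restr (μ • Matrix.mulVec Aᵀ (A.mulVec (xS - xk)) - (xS - xk) + μ • h)
          ((S \ T) ∪ (T \ S))) :=
  stmt_11_general A μ xS xk h S T hxS g hg hthres
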